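/- Let ν be a finite point measure on ℝ≥0 (a finite multiset of points), z₀ a point in the support of ν, and m ∈ ℕ. Define the m-fold falling factorial measure ν^{⊗m,↓}(d(z₁,…,z_m)) = ν(dz₁)(ν−δ_{z₁})(dz₂)…(ν−Σ_{j<m}δ_{z_j})(dz_m). Then ν^{⊗m,↓} − (ν−δ_{z₀})^{⊗m,↓} = Σ_{i=1}^m (ν−δ_{z₀})^{⊗(m−1),↓} ⊗_i δ_{z₀}, where ⊗_i denotes insertion of the Dirac mass δ_{z₀} into the i-th coordinate. -/

import Mathlib

open scoped Classical
open Finset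

/-- The `m`-fold falling factorial (sampling without replacement) measure
`ν^{⊗m,↓}` of a finite point measure `ν` on `ℝ≥0`, encoded as the multiset of
ordered `m`-samples without replacement from the multiset of atoms. -/
noncomputable def factorialSample : ℕ → Multiset NNReal → Multiset (List NNReal)
  | 0, _ => {[]}
  | m + 1, s => s.bind fun z => (factorialSample m (s.erase z)).map fun l => z :: l

/-!
Write `ν = z₀ ::ₘ μ` and induct on `m`, splitting a sample by its first entry. Either it is
the distinguished copy of `z₀`, and the rest is a sample from `μ` (the `i = 0` insertion term),
or it is an atom `z` of `μ`, and the rest is a sample from `z₀ ::ₘ μ.erase z`, to which the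
induction hypothesis applies: its `μ.erase z`-samples complete `factorialSample (m + 1) μ`,
and its insertions at position `i` become insertions at position `i + 1`.
-/

lemma Multiset.map_finsetSum {α β ι : Type*} (f : α → β) (t : Finset ι)
    (S : ι → Multiset α) :
    (∑ i ∈ t, S i).map f = ∑ i ∈ t, (S i).map f :=
  map_sum (Multiset.mapAddMonoidHom f) S t

lemma factorialSample_succ_cons (a : NNReal) (n : ℕ) (μ : Multiset NNReal) :
    factorialSample (n + 1) (a ::ₘ μ)
      = (factorialSample n μ).map (a :: ·)
        + μ.bind fun z => (factorialSample n (a ::ₘ μ.erase z)).map (z :: ·) := by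
  rw [factorialSample, Multiset.cons_bind, Multiset.erase_cons_head]
  congr 1
  exact Multiset.bind_congr fun z hz => by rw [Multiset.erase_cons_tail_of_mem hz]

lemma map_insertIdx_succ_factorialSample (a : NNReal) (i : ℕ) {n : ℕ} (hn : 0 < n)
    (μ : Multiset NNReal) :
    (factorialSample n μ).map (·.insertIdx (i + 1) a)
      = μ.bind fun z =>
          ((factorialSample (n - 1) (μ.erase z)).map (·.insertIdx i a)).map (z :: ·) := by
  obtain ⟨k, rfl⟩ := Nat.exists_eq_add_one_of_ne_zero hn.ne'
  simp only [factorialSample, Multiset.map_bind, Multiset.map_map, Function.comp_def,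
    List.insertIdx_succ_cons, Nat.add_sub_cancel]

lemma factorialSample_cons (a : NNReal) (m : ℕ) (μ : Multiset NNReal) :
    factorialSample m (a ::ₘ μ)
      = factorialSample m μ
        + ∑ i ∈ range m, (factorialSample (m - 1) μ).map (·.insertIdx i a) := by
  induction m generalizing μ with
  | zero => simp [factorialSample]
  | succ n ih =>
    have hsum : ∑ i ∈ range n, (factorialSample n μ).map (·.insertIdx (i + 1) a)
        = μ.bind fun z => ∑ i ∈ range n,
            ((factorialSample (n - 1) (μ.erase z)).map (·.insertIdx i a)).map (z :: ·) :=
      (Finset.sum_congr rfl fun i hi =>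
        map_insertIdx_succ_factorialSample a i (Nat.zero_lt_of_lt (mem_range.mp hi)) μ).trans
        Multiset.sum_map_sum.symm
    calc factorialSample (n + 1) (a ::ₘ μ)
        = (factorialSample n μ).map (a :: ·) + μ.bind fun z =>
            (factorialSample n (μ.erase z)).map (z :: ·)
            + ∑ i ∈ range n,
              ((factorialSample (n - 1) (μ.erase z)).map (·.insertIdx i a)).map (z :: ·) := by
          rw [factorialSample_succ_cons]
          simp only [ih, Multiset.map_add, Multiset.map_finsetSum]
      _ = factorialSample (n + 1) μ
            + ∑ i ∈ range (n + 1), (factorialSample n μ).map (·.insertIdx i a) := by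
          rw [Multiset.bind_add, ← hsum, Finset.sum_range_succ', factorialSample]
          simp only [List.insertIdx_zero]
          abel

/-- Removal rule for factorial measures: if `z₀ ∈ supp ν`, then
`ν^{⊗m,↓} − (ν−δ_{z₀})^{⊗m,↓} = Σ_{i=1}^m (ν−δ_{z₀})^{⊗(m−1),↓} ⊗_i δ_{z₀}`,
where `⊗_i` inserts the Dirac mass at `z₀` in the `i`-th coordinate. -/
theorem factorialSample_erase_singleton (ν : Multiset NNReal) (z₀ : NNReal)
    (hz₀ : z₀ ∈ ν) (m : ℕ) :
    factorialSample m ν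
      = factorialSample m (ν.erase z₀)
        + ∑ i ∈ Finset.range m,
            (factorialSample (m - 1) (ν.erase z₀)).map (fun l => l.insertIdx i z₀) := by
  rw [← factorialSample_cons, Multiset.cons_erase hz₀]
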